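/- Let Γ be a finite simplicial graph and 𝒢 = (G_v)_{v∈V} a family of nontrivial groups, and let X(Γ,𝒢) be the Cayley graph of Γ𝒢 with respect to the generating set ⋃_{v∈V} (Ĝ_v ∖ {1}), with graph distance d. Let g ∈ Γ𝒢, let u, v ∈ V be distinct, and let a ∈ Ĝ_u ∖ {1} and b ∈ Ĝ_v ∖ {1}. Then there exists w ∈ Γ𝒢 adjacent in X(Γ,𝒢) to both g·a and g·b with d(g,w) = 2 if and only if u and v are adjacent in Γ; and in that case w = g·a·b is the unique such element. -/

import Mathlib

open scoped Pointwise

section GraphProductDefs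

variable {V : Type} (Γ : SimpleGraph V) (G : V → Type) [∀ v, Group (G v)]

/-- The set of commutation relators defining the graph product of the family `G` over `Γ`. -/
def graphProductRels : Set (Monoid.CoprodI G) :=
  { x | ∃ (u v : V) (g : G u) (h : G v), Γ.Adj u v ∧
      x = Monoid.CoprodI.of g * Monoid.CoprodI.of h *
        (Monoid.CoprodI.of g)⁻¹ * (Monoid.CoprodI.of h)⁻¹ }

/-- The graph product of the family `G` over the simplicial graph `Γ`. -/
abbrev GraphProduct : Type :=
  Monoid.CoprodI G ⧸ Subgroup.normalClosure (graphProductRels Γ G)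

/-- The canonical map from a vertex group to the graph product. -/
def GraphProduct.of (v : V) : G v →* GraphProduct Γ G :=
  (QuotientGroup.mk' (Subgroup.normalClosure (graphProductRels Γ G))).comp Monoid.CoprodI.of

/-- The image `Ĝ_v` of a vertex group in the graph product. -/
def vertexSubgroup (v : V) : Subgroup (GraphProduct Γ G) :=
  (GraphProduct.of Γ G v).range

/-- The subgroup `⟨Λ⟩` generated by the vertex groups with vertices in `Λ`. -/
def spanSubgroup (Λ : Set V) : Subgroup (GraphProduct Γ G) :=
  ⨆ v ∈ Λ, vertexSubgroup Γ G v

/-- The star of a vertex: the vertex together with its neighbours. -/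
def starSet (u : V) : Set V := insert u {w | Γ.Adj u w}

/-- `Λ` is a connected component of the subgraph of `Γ` induced on `S`: it is a nonempty
connected subset of `S` closed under adjacency within `S`. -/
def IsConnCompOf (S Λ : Set V) : Prop :=
  Λ.Nonempty ∧ Λ ⊆ S ∧ (Γ.induce Λ).Connected ∧
    ∀ a ∈ Λ, ∀ b ∈ S, Γ.Adj a b → b ∈ Λ

/-- A local automorphism: permutes the vertex subgroups according to a graph automorphism. -/
def IsLocalAut (φ : MulAut (GraphProduct Γ G)) : Prop :=
  ∃ σ : Γ ≃g Γ, ∀ v : V,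
    Subgroup.map φ.toMonoidHom (vertexSubgroup Γ G v) = vertexSubgroup Γ G (σ v)

/-- A partial conjugation: conjugates the vertex groups of a connected component `Λ` of the
graph induced on the complement of the star of `u` by an element `h ∈ Ĝ_u`, and fixes the
other vertex groups pointwise. -/
def IsPartialConj (φ : MulAut (GraphProduct Γ G)) : Prop :=
  ∃ (u : V) (Λ : Set V) (h : GraphProduct Γ G),
    h ∈ vertexSubgroup Γ G u ∧
    IsConnCompOf Γ {w | w ∉ starSet Γ u} Λ ∧
    (∀ w ∈ Λ, ∀ x ∈ vertexSubgroup Γ G w, φ x = h * x * h⁻¹) ∧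
    (∀ w, w ∉ Λ → ∀ x ∈ vertexSubgroup Γ G w, φ x = x)

/-- The subgroup of `Aut(Γ𝒢)` generated by local automorphisms and partial conjugations. -/
def ConjP : Subgroup (MulAut (GraphProduct Γ G)) :=
  Subgroup.closure {φ | IsLocalAut Γ G φ ∨ IsPartialConj Γ G φ}

/-- A conjugating automorphism: sends each vertex subgroup to a conjugate of a vertex
subgroup. -/
def IsConjugating (φ : MulAut (GraphProduct Γ G)) : Prop :=
  ∀ v : V, ∃ (w : V) (g : GraphProduct Γ G),
    Subgroup.map φ.toMonoidHom (vertexSubgroup Γ G v) =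
      Subgroup.map (MulAut.conj g).toMonoidHom (vertexSubgroup Γ G w)

end GraphProductDefs

section Extra

variable {V : Type} (Γ : SimpleGraph V) (G : V → Type) [∀ v, Group (G v)]

/-- The Cayley graph `X(Γ,𝒢)` of the graph product with respect to the union of the
(nontrivial elements of the) vertex subgroups. -/
def cayley : SimpleGraph (GraphProduct Γ G) where
  Adj x y := x ≠ y ∧ ∃ v : V, x⁻¹ * y ∈ vertexSubgroup Γ G v
  symm := by
    constructor
    rintro x y ⟨hxy, v, hv⟩
    exact ⟨hxy.symm, v, by simpa using (vertexSubgroup Γ G v).inv_mem hv⟩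
  loopless := ⟨fun x h => h.1 rfl⟩

/-- A molecular graph: finite, connected, minimal degree at least 2, girth at least 5. -/
def Molecular : Prop :=
  Γ.Connected ∧ (∀ v : V, 2 ≤ (Γ.neighborSet v).ncard) ∧ 5 ≤ Γ.girth

/-- An atomic graph: molecular, and the subgraph induced on the complement of each star is
nonempty and connected. -/
def Atomic : Prop :=
  Molecular Γ ∧ ∀ u : V, {w | w ∉ starSet Γ u}.Nonempty ∧
    (Γ.induce {w | w ∉ starSet Γ u}).Connected

/-- The link of a set of vertices: the vertices adjacent to every vertex of the set. -/
def linkSet (Λ : Set V) : Set V := {w | ∀ a ∈ Λ, Γ.Adj w a}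

/-- A subgroup decomposes non-trivially as a direct product. -/
def IsNontrivDirectProduct (H : Subgroup (GraphProduct Γ G)) : Prop :=
  ∃ (A B : Type) (_ : Group A) (_ : Group B),
    Nontrivial A ∧ Nontrivial B ∧ Nonempty (H ≃* A × B)

/-- `Γ` has a SIL: two distinct non-adjacent vertices `u`, `v` such that the graph induced on
the complement of `link(u) ∩ link(v)` has a connected component containing neither `u` nor
`v`. -/
def HasSIL : Prop :=
  ∃ u v : V, u ≠ v ∧ ¬ Γ.Adj u v ∧
    ∃ Λ : Set V, IsConnCompOf Γ {w | ¬ (Γ.Adj u w ∧ Γ.Adj v w)} Λ ∧ u ∉ Λ ∧ v ∉ Λ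

end Extra

/-!
The projection `Γ𝒢 → ∏ᵥ G_v` remembers, for a product `x * y` of two vertex-group elements,
which vertex groups the letters come from. Hence if `a ∈ Ĝ_u`, `b ∈ Ĝ_v` are nontrivial and
`u ≠ v`, the equation `x * y = a * b` with `x, y` in vertex groups forces `(x, y) = (a, b)` or
`(x, y) = (b, a)`. A common neighbour `w ≠ g` of `g * a` and `g * b` in the Cayley graph
satisfies `(g * b)⁻¹ w * ((g * a)⁻¹ w)⁻¹ = b⁻¹ * a`, so `w = g * a * b = g * b * a`. Finally, `a`
and `b` commute exactly when `u` and `v` are adjacent: one way by the defining relations, the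
other by retracting onto the free product of `G_u` and `G_v`.
-/

open Monoid

lemma SimpleGraph.dist_eq_two_iff {V : Type*} {Γ : SimpleGraph V} {x y : V} :
    Γ.dist x y = 2 ↔ x ≠ y ∧ ¬ Γ.Adj x y ∧ (Γ.commonNeighbors x y).Nonempty := by
  rw [← edist_eq_two_iff, dist, ENat.toNat_eq_iff two_ne_zero]
  rfl

lemma Monoid.CoprodI.not_commute_of_ne {ι : Type*} {M : ι → Type*} [∀ i, Monoid (M i)]
    {i j : ι} (hij : i ≠ j) {x : M i} {y : M j} (hx : x ≠ 1) (hy : y ≠ 1) :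
    ¬ Commute (of x) (of y) := by
  classical
  intro h
  let w₁ : Word M := .cons x (.cons y .empty (by simp [Word.fstIdx]) hy) (by simp [hij.symm]) hx
  let w₂ : Word M := .cons y (.cons x .empty (by simp [Word.fstIdx]) hx) (by simp [hij]) hy
  have hw : w₁ = w₂ := Word.equiv.symm.injective <| by simpa [Word.equiv, w₁, w₂] using h.eq
  simpa [w₁, w₂, hij] using congrArg Word.fstIdx hw

namespace GraphProduct

variable {V : Type} {Γ : SimpleGraph V} {G : V → Type} [∀ v, Group (G v)]

def lift {H : Type*} [Group H] (f : ∀ v, G v →* H)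
    (hf : ∀ u v, Γ.Adj u v → ∀ x y, Commute (f u x) (f v y)) : GraphProduct Γ G →* H :=
  QuotientGroup.lift _ (CoprodI.lift f) <| Subgroup.normalClosure_le_normal <| by
    rintro _ ⟨u, v, x, y, huv, rfl⟩
    simp [(hf u v huv x y).eq]

@[simp]
lemma lift_of {H : Type*} [Group H] (f : ∀ v, G v →* H)
    (hf : ∀ u v, Γ.Adj u v → ∀ x y, Commute (f u x) (f v y)) (v : V) (x : G v) :
    lift f hf (of Γ G v x) = f v x := by
  simp [lift, GraphProduct.of]

lemma commute_of_adj {u v : V} (huv : Γ.Adj u v) (x : G u) (y : G v) :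
    Commute (of Γ G u x) (of Γ G v y) := by
  have hrel : CoprodI.of x * CoprodI.of y * (CoprodI.of x)⁻¹ * (CoprodI.of y)⁻¹ ∈
      Subgroup.normalClosure (graphProductRels Γ G) :=
    Subgroup.subset_normalClosure ⟨u, v, x, y, huv, rfl⟩
  have h := (QuotientGroup.eq_one_iff _).2 hrel
  simp only [QuotientGroup.mk_mul, QuotientGroup.mk_inv] at h
  exact commutatorElement_eq_one_iff_commute.1 h

section toPi

variable [DecidableEq V]

def toPi : GraphProduct Γ G →* ∀ v, G v :=
  lift (MonoidHom.mulSingle G) fun _ _ huv x y => Pi.mulSingle_commute huv.ne x y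

@[simp]
lemma toPi_of (v : V) (x : G v) : toPi (of Γ G v x) = Pi.mulSingle v x :=
  lift_of _ _ v x

lemma toPi_apply_of_mem_of_ne {r i : V} {c : GraphProduct Γ G}
    (hc : c ∈ vertexSubgroup Γ G r) (hi : i ≠ r) : toPi c i = 1 := by
  obtain ⟨x, rfl⟩ := hc
  simp [hi]

lemma eq_of_toPi_apply_eq {r : V} {c c' : GraphProduct Γ G} (hc : c ∈ vertexSubgroup Γ G r)
    (hc' : c' ∈ vertexSubgroup Γ G r) (h : toPi c r = toPi c' r) : c = c' := by
  obtain ⟨x, rfl⟩ := hc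
  obtain ⟨x', rfl⟩ := hc'
  simp_all

lemma toPi_apply_ne_one {r : V} {c : GraphProduct Γ G} (hc : c ∈ vertexSubgroup Γ G r)
    (hc1 : c ≠ 1) : toPi c r ≠ 1 := fun h =>
  hc1 <| eq_of_toPi_apply_eq hc (one_mem _) (by simpa using h)

end toPi

def toCoprodI (S : Set V) [DecidablePred (· ∈ S)] (hS : Γ.IsIndepSet S) :
    GraphProduct Γ G →* CoprodI G :=
  lift (fun v => if v ∈ S then CoprodI.of else 1) fun u v huv x y => by
    by_cases hu : u ∈ S
    · by_cases hv : v ∈ S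
      · exact absurd huv (hS hu hv huv.ne)
      · simp [hv]
    · simp [hu]

lemma toCoprodI_of_mem {S : Set V} [DecidablePred (· ∈ S)] (hS : Γ.IsIndepSet S) {v : V}
    (hv : v ∈ S) (x : G v) : toCoprodI S hS (of Γ G v x) = CoprodI.of x := by
  simp [toCoprodI, hv]

variable {u v p q : V} {a b x y : GraphProduct Γ G}

lemma commute_iff_adj (huv : u ≠ v) (ha : a ∈ vertexSubgroup Γ G u) (ha1 : a ≠ 1)
    (hb : b ∈ vertexSubgroup Γ G v) (hb1 : b ≠ 1) : Commute a b ↔ Γ.Adj u v := by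
  classical
  obtain ⟨x, rfl⟩ := ha
  obtain ⟨y, rfl⟩ := hb
  refine ⟨fun h => ?_, fun h => commute_of_adj h x y⟩
  by_contra hadj
  have hS : Γ.IsIndepSet {u, v} := by
    simpa [SimpleGraph.isIndepSet_iff, Set.pairwise_insert, hadj, huv] using fun h => hadj h.symm
  have hx : x ≠ 1 := by rintro rfl; simp at ha1
  have hy : y ≠ 1 := by rintro rfl; simp at hb1
  apply CoprodI.not_commute_of_ne huv hx hy
  simpa [toCoprodI_of_mem hS] using h.map (toCoprodI {u, v} hS)

lemma eq_and_eq_or_eq_and_eq_of_mul_eq_mul (huv : u ≠ v) (ha : a ∈ vertexSubgroup Γ G u)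
    (ha1 : a ≠ 1) (hb : b ∈ vertexSubgroup Γ G v) (hb1 : b ≠ 1) (hx : x ∈ vertexSubgroup Γ G p)
    (hy : y ∈ vertexSubgroup Γ G q) (h : x * y = a * b) : x = a ∧ y = b ∨ x = b ∧ y = a := by
  classical
  have hu : toPi x u * toPi y u = toPi a u := by
    simpa [toPi_apply_of_mem_of_ne hb huv] using congrFun (congrArg toPi h) u
  have hv : toPi x v * toPi y v = toPi b v := by
    simpa [toPi_apply_of_mem_of_ne ha huv.symm] using congrFun (congrArg toPi h) v
  have hpqu : p = u ∨ q = u := by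
    by_contra! hne
    apply toPi_apply_ne_one ha ha1
    simpa [toPi_apply_of_mem_of_ne hx hne.1.symm, toPi_apply_of_mem_of_ne hy hne.2.symm]
      using hu.symm
  have hpqv : p = v ∨ q = v := by
    by_contra! hne
    apply toPi_apply_ne_one hb hb1
    simpa [toPi_apply_of_mem_of_ne hx hne.1.symm, toPi_apply_of_mem_of_ne hy hne.2.symm]
      using hv.symm
  rcases hpqu with rfl | rfl <;> rcases hpqv with rfl | rfl
  · exact absurd rfl huv
  · have hxa : x = a := eq_of_toPi_apply_eq hx ha <| by
      simpa [toPi_apply_of_mem_of_ne hy huv] using hu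
    exact .inl ⟨hxa, mul_left_cancel (hxa ▸ h)⟩
  · have hxb : x = b := eq_of_toPi_apply_eq hx hb <| by
      simpa [toPi_apply_of_mem_of_ne hy huv.symm] using hv
    have hya : y = a := eq_of_toPi_apply_eq hy ha <| by
      simpa [toPi_apply_of_mem_of_ne hx huv] using hu
    exact .inr ⟨hxb, hya⟩
  · exact absurd rfl huv

lemma mul_notMem_vertexSubgroup (huv : u ≠ v) (ha : a ∈ vertexSubgroup Γ G u) (ha1 : a ≠ 1)
    (hb : b ∈ vertexSubgroup Γ G v) (hb1 : b ≠ 1) (r : V) : a * b ∉ vertexSubgroup Γ G r :=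
  fun hab => by
    rcases eq_and_eq_or_eq_and_eq_of_mul_eq_mul huv ha ha1 hb hb1 hab
      (one_mem (vertexSubgroup Γ G r)) (mul_one _)
      with ⟨-, h⟩ | ⟨-, h⟩
    exacts [hb1 h.symm, ha1 h.symm]

end GraphProduct

open GraphProduct

section Cayley

variable {V : Type} {Γ : SimpleGraph V} {G : V → Type} [∀ v, Group (G v)]

lemma cayley_adj_mul_right_iff {g c : GraphProduct Γ G} :
    (cayley Γ G).Adj g (g * c) ↔ c ≠ 1 ∧ ∃ v, c ∈ vertexSubgroup Γ G v := by
  simp [cayley]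

lemma cayley_eq_mul_mul_of_adj_of_adj {u v : V} {a b g w : GraphProduct Γ G} (huv : u ≠ v)
    (ha : a ∈ vertexSubgroup Γ G u) (ha1 : a ≠ 1) (hb : b ∈ vertexSubgroup Γ G v) (hb1 : b ≠ 1)
    (haw : (cayley Γ G).Adj (g * a) w) (hbw : (cayley Γ G).Adj (g * b) w) (hw : w ≠ g) :
    w = g * a * b ∧ Commute a b := by
  obtain ⟨-, p, hs⟩ := haw
  obtain ⟨-, q, ht⟩ := hbw
  have h : (g * b)⁻¹ * w * ((g * a)⁻¹ * w)⁻¹ = b⁻¹ * a := by group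
  rcases eq_and_eq_or_eq_and_eq_of_mul_eq_mul huv.symm (inv_mem hb) (inv_ne_one.2 hb1) ha ha1
    ht (inv_mem hs) h with ⟨ht', -⟩ | ⟨ht', hs'⟩
  · exact absurd (by simpa using inv_mul_eq_iff_eq_mul.1 ht') hw
  · have hwa : w = g * a * b := inv_mul_eq_iff_eq_mul.1 (inv_inj.1 hs')
    have hwb : w = g * b * a := inv_mul_eq_iff_eq_mul.1 ht'
    exact ⟨hwa, mul_left_cancel (a := g) (by rw [← mul_assoc, ← mul_assoc, ← hwa, ← hwb])⟩

end Cayley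

theorem square_iff_adjacent_general {V : Type}
    (Γ : SimpleGraph V) (G : V → Type) [∀ v, Group (G v)]
    (g : GraphProduct Γ G) (u v : V) (huv : u ≠ v)
    (a b : GraphProduct Γ G)
    (ha : a ∈ vertexSubgroup Γ G u) (ha1 : a ≠ 1)
    (hb : b ∈ vertexSubgroup Γ G v) (hb1 : b ≠ 1) :
    ((∃ w : GraphProduct Γ G, (cayley Γ G).Adj (g * a) w ∧ (cayley Γ G).Adj (g * b) w ∧
        (cayley Γ G).dist g w = 2) ↔ Γ.Adj u v) ∧
    (Γ.Adj u v → ∀ w : GraphProduct Γ G, (cayley Γ G).Adj (g * a) w →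
      (cayley Γ G).Adj (g * b) w → (cayley Γ G).dist g w = 2 → w = g * a * b) := by
  have hcomm := commute_iff_adj huv ha ha1 hb hb1
  have hsquare : ∀ w, (cayley Γ G).Adj (g * a) w → (cayley Γ G).Adj (g * b) w →
      (cayley Γ G).dist g w = 2 → w = g * a * b ∧ Commute a b := fun w haw hbw hdist =>
    cayley_eq_mul_mul_of_adj_of_adj huv ha ha1 hb hb1 haw hbw
      (SimpleGraph.dist_eq_two_iff.1 hdist).1.symm
  refine ⟨⟨fun ⟨w, haw, hbw, hdist⟩ => hcomm.1 (hsquare w haw hbw hdist).2, fun hadj => ?_⟩,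
    fun _ w haw hbw hdist => (hsquare w haw hbw hdist).1⟩
  have hab : ∀ r, a * b ∉ vertexSubgroup Γ G r := mul_notMem_vertexSubgroup huv ha ha1 hb hb1
  have hab1 : a * b ≠ 1 := fun h => hab u (h ▸ one_mem _)
  refine ⟨g * a * b, cayley_adj_mul_right_iff.2 ⟨hb1, v, hb⟩, ?_, ?_⟩
  · rw [mul_assoc, (hcomm.2 hadj).eq, ← mul_assoc]
    exact cayley_adj_mul_right_iff.2 ⟨ha1, u, ha⟩
  · refine SimpleGraph.dist_eq_two_iff.2 ⟨?_, ?_, g * a, ?_⟩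
    · simpa [mul_assoc] using hab1
    · rw [mul_assoc, cayley_adj_mul_right_iff]
      exact fun ⟨_, r, hr⟩ => hab r hr
    · exact ⟨cayley_adj_mul_right_iff.2 ⟨ha1, u, ha⟩,
        (cayley_adj_mul_right_iff.2 ⟨hb1, v, hb⟩).symm⟩

/-- **Fact.** Two edges of `X(Γ,𝒢)` issued from a common vertex `g` and labelled by distinct
vertex groups `G_u`, `G_v` span a square if and only if `u` and `v` are adjacent, and in
that case the fourth vertex is `g·a·b`. -/
theorem square_iff_adjacent {V : Type} [Fintype V]
    (Γ : SimpleGraph V) (G : V → Type) [∀ v, Group (G v)] [∀ v, Nontrivial (G v)]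
    (g : GraphProduct Γ G) (u v : V) (huv : u ≠ v)
    (a b : GraphProduct Γ G)
    (ha : a ∈ vertexSubgroup Γ G u) (ha1 : a ≠ 1)
    (hb : b ∈ vertexSubgroup Γ G v) (hb1 : b ≠ 1) :
    ((∃ w : GraphProduct Γ G, (cayley Γ G).Adj (g * a) w ∧ (cayley Γ G).Adj (g * b) w ∧
        (cayley Γ G).dist g w = 2) ↔ Γ.Adj u v) ∧
    (Γ.Adj u v → ∀ w : GraphProduct Γ G, (cayley Γ G).Adj (g * a) w →
      (cayley Γ G).Adj (g * b) w → (cayley Γ G).dist g w = 2 → w = g * a * b) :=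
  square_iff_adjacent_general Γ G g u v huv a b ha ha1 hb hb1
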